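/- For all 0 ≤ m ≤ p, Σ_{a ∈ {±1}^{2p+1}} f(a) H_D^{(m)}(a) = 1. -/

import Mathlib

open scoped Classical
open Finset

noncomputable section

/-- Bit strings in {±1}^{2p+1}, indexed by integers -p ≤ j ≤ p (Bool-encoded). -/
def QStr (p : ℕ) : Type := {j : ℤ // j ∈ Finset.Icc (-(p : ℤ)) (p : ℤ)} → Bool

instance (p : ℕ) : Fintype (QStr p) := by unfold QStr; infer_instance
instance (p : ℕ) : DecidableEq (QStr p) := by unfold QStr; infer_instance

/-- The ±1 entry of the string `a` at index `j` (1 outside the index range). -/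
def ent (p : ℕ) (a : QStr p) (j : ℤ) : ℝ :=
  if h : j ∈ Finset.Icc (-(p : ℤ)) (p : ℤ) then (if a ⟨j, h⟩ then 1 else -1) else 1

/-- Transfer matrix element ⟨x|e^{iβX}|y⟩ = cos β if x = y, i sin β otherwise. -/
def bket (x y : ℝ) (β : ℝ) : ℂ :=
  if x = y then (Real.cos β : ℂ) else Complex.I * (Real.sin β : ℂ)

/-- f(a) = (1/2)⟨a₁|e^{iβ₁X}|a₂⟩⋯⟨a_p|e^{iβ_pX}|a₀⟩⟨a₀|e^{-iβ_pX}|a_{-p}⟩⋯⟨a_{-2}|e^{-iβ₁X}|a_{-1}⟩. -/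
def fQ (p : ℕ) (β : ℕ → ℝ) (a : QStr p) : ℂ :=
  (1 / 2 : ℂ) * ∏ r ∈ Finset.Icc 1 p,
    (bket (ent p a (r : ℤ)) (ent p a (if r = p then 0 else (r : ℤ) + 1)) (β r) *
      bket (ent p a (if r = p then 0 else -((r : ℤ) + 1))) (ent p a (-(r : ℤ))) (-(β r)))

/-- Γ_r = γ_r, Γ₀ = 0, Γ_{-r} = -γ_r. -/
def Gam (γ : ℕ → ℝ) (j : ℤ) : ℝ :=
  if 0 < j then γ j.toNat else if j < 0 then -(γ (-j).toNat) else 0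

/-- Γ·(ab) = Σ_{j=-p}^{p} Γ_j a_j b_j. -/
def Gdot (p : ℕ) (γ : ℕ → ℝ) (a b : QStr p) : ℝ :=
  ∑ j ∈ Finset.Icc (-(p : ℤ)) (p : ℤ), Gam γ j * ent p a j * ent p b j

/-- a ∈ B₀ iff a_{-r} = a_r for all 1 ≤ r ≤ p. -/
def symB (p : ℕ) (a : QStr p) : Prop :=
  ∀ r ∈ Finset.Icc (1 : ℤ) (p : ℤ), ent p a (-r) = ent p a r

/-- T(a): the largest 1 ≤ r ≤ p with a_r ≠ a_{-r}, and 0 for a ∈ B₀. -/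
def Tof (p : ℕ) (a : QStr p) : ℤ :=
  WithBot.unbotD 0 (((Finset.Icc (1 : ℤ) (p : ℤ)).filter (fun r => ent p a r ≠ ent p a (-r))).max)

/-- The string a' : negate entries with 1 ≤ |j| ≤ T(a), keep the rest. -/
def primeQ (p : ℕ) (a : QStr p) : QStr p :=
  fun j => if 1 ≤ |j.1| ∧ |j.1| ≤ Tof p a then !(a j) else a j

/-- Entrywise negation -a. -/
def negQ (p : ℕ) (a : QStr p) : QStr p := fun j => !(a j)

/-- Index reversal ā, with ā_j = a_{-j}. -/
def revQ (p : ℕ) (a : QStr p) : QStr p :=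
  fun j => a ⟨-j.1, by have h := j.2; simp only [Finset.mem_Icc] at h ⊢; omega⟩

/-- The finite-D iteration (cosine form):
H_D^{(0)}(a) = 1, H_D^{(m)}(a) = (Σ_b f(b) H_D^{(m-1)}(b) cos[(1/√D) Γ·(ab)])^D. -/
def HD (p : ℕ) (β γ : ℕ → ℝ) (D : ℕ) : ℕ → QStr p → ℂ
  | 0, _ => 1
  | m + 1, a =>
      (∑ b : QStr p, fQ p β b * HD p β γ D m b *
        (Real.cos ((1 / Real.sqrt D) * Gdot p γ a b) : ℂ)) ^ D

/-- The finite-D iteration (exponential form):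
H_D^{(0)}(a) = 1, H_D^{(m)}(a) = (Σ_b f(b) H_D^{(m-1)}(b) exp[-(i/√D) Γ·(ab)])^D. -/
def HDexp (p : ℕ) (β γ : ℕ → ℝ) (D : ℕ) : ℕ → QStr p → ℂ
  | 0, _ => 1
  | m + 1, a =>
      (∑ b : QStr p, fQ p β b * HDexp p β γ D m b *
        Complex.exp (-(Complex.I / (Real.sqrt D : ℂ)) * (Gdot p γ a b : ℂ))) ^ D

/-- The D → ∞ iteration: H^{(0)}(a) = 1,
H^{(m)}(a) = exp(-(1/2) Σ_b f(b) H^{(m-1)}(b) (Γ·(ab))²). -/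
def Hinf (p : ℕ) (β γ : ℕ → ℝ) : ℕ → QStr p → ℂ
  | 0, _ => 1
  | m + 1, a =>
      Complex.exp (-(1 / 2 : ℂ) *
        ∑ b : QStr p, fQ p β b * Hinf p β γ m b * ((Gdot p γ a b) ^ 2 : ℝ))

/-- G^{(m)}_{j,k} = Σ_a f(a) H^{(m)}(a) a_j a_k, with H^{(m)} the D → ∞ iterates. -/
def GmatH (p : ℕ) (β γ : ℕ → ℝ) (m : ℕ) (j k : ℤ) : ℂ :=
  ∑ a : QStr p, fQ p β a * Hinf p β γ m a * (ent p a j : ℂ) * (ent p a k : ℂ)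

/-- The recursively-defined G matrices: G^{(0)}_{j,k} = Σ_a f(a) a_j a_k and
G^{(m)}_{j,k} = Σ_a f(a) a_j a_k exp(-(1/2) Σ_{j',k'} G^{(m-1)}_{j',k'} Γ_{j'} Γ_{k'} a_{j'} a_{k'}). -/
def GmatR (p : ℕ) (β γ : ℕ → ℝ) : ℕ → ℤ → ℤ → ℂ
  | 0, j, k => ∑ a : QStr p, fQ p β a * (ent p a j : ℂ) * (ent p a k : ℂ)
  | m + 1, j, k =>
      ∑ a : QStr p, fQ p β a * (ent p a j : ℂ) * (ent p a k : ℂ) *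
        Complex.exp (-(1 / 2 : ℂ) *
          ∑ j' ∈ Finset.Icc (-(p : ℤ)) (p : ℤ), ∑ k' ∈ Finset.Icc (-(p : ℤ)) (p : ℤ),
            GmatR p β γ m j' k' * (Gam γ j' : ℂ) * (Gam γ k' : ℂ) *
              (ent p a j' : ℂ) * (ent p a k' : ℂ))

/-- H^{(m+1)}(a) expressed through G^{(m)}:
H^{(m+1)}(a) = exp(-(1/2) Σ_{j',k'} G^{(m)}_{j',k'} Γ_{j'} Γ_{k'} a_{j'} a_{k'}). -/
def HG (p : ℕ) (β γ : ℕ → ℝ) (m : ℕ) (a : QStr p) : ℂ :=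
  Complex.exp (-(1 / 2 : ℂ) *
    ∑ j' ∈ Finset.Icc (-(p : ℤ)) (p : ℤ), ∑ k' ∈ Finset.Icc (-(p : ℤ)) (p : ℤ),
      GmatR p β γ m j' k' * (Gam γ j' : ℂ) * (Gam γ k' : ℂ) *
        (ent p a j' : ℂ) * (ent p a k' : ℂ))

end

section Aux
open Finset
variable {p : ℕ}

lemma ent_cases (a : QStr p) (j : ℤ) : ent p a j = 1 ∨ ent p a j = -1 := by
  unfold ent; split
  · split <;> simp
  · left; rfl

lemma ent_mul_self (a : QStr p) (j : ℤ) : ent p a j * ent p a j = 1 := by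
  rcases ent_cases a j with h | h <;> rw [h] <;> norm_num

lemma B_inj {x y : Bool} (h : (if x then (1:ℝ) else -1) = if y then 1 else -1) : x = y := by
  cases x <;> cases y <;> simp_all <;> norm_num at h

lemma Gam_zero (γ : ℕ → ℝ) : Gam γ 0 = 0 := by simp [Gam]

lemma Gam_neg (γ : ℕ → ℝ) (j : ℤ) : Gam γ (-j) = -Gam γ j := by
  unfold Gam
  rcases lt_trichotomy j 0 with h | h | h
  · rw [if_pos (by omega), if_neg (by omega), if_pos h, neg_neg]
  · subst h; simp
  · rw [if_neg (by omega), if_pos (by omega), if_pos h, neg_neg]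

/-- The filter used in `Tof`. -/
noncomputable def TF (p : ℕ) (a : QStr p) : Finset ℤ :=
  (Finset.Icc (1 : ℤ) (p : ℤ)).filter (fun r => ent p a r ≠ ent p a (-r))

lemma Tof_eq_max' (a : QStr p) (h : (TF p a).Nonempty) : Tof p a = (TF p a).max' h := by
  unfold Tof
  rw [show ((Finset.Icc (1 : ℤ) (p : ℤ)).filter (fun r => ent p a r ≠ ent p a (-r))) = TF p a from rfl]
  rw [← Finset.coe_max' h, WithBot.unbotD_coe]

lemma TF_nonempty_of_not_symB {a : QStr p} (h : ¬ symB p a) : (TF p a).Nonempty := by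
  unfold symB at h
  push_neg at h
  obtain ⟨r, hr, hne⟩ := h
  exact ⟨r, Finset.mem_filter.mpr ⟨hr, fun hh => hne (hh.symm)⟩⟩

lemma Tof_mem_TF {a : QStr p} (h : ¬ symB p a) : Tof p a ∈ TF p a := by
  have hne := TF_nonempty_of_not_symB h
  rw [Tof_eq_max' a hne]; exact Finset.max'_mem _ _

lemma Tof_eq_zero_of_symB {a : QStr p} (h : symB p a) : Tof p a = 0 := by
  unfold Tof
  have : ((Finset.Icc (1 : ℤ) (p : ℤ)).filter (fun r => ent p a r ≠ ent p a (-r))) = ∅ := by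
    rw [Finset.filter_eq_empty_iff]
    intro r hr
    simp only [ne_eq, not_not]
    exact (h r hr).symm
  rw [this, Finset.max_empty]; rfl

lemma one_le_Tof {a : QStr p} (h : ¬ symB p a) : 1 ≤ Tof p a := by
  have := Tof_mem_TF h
  rw [TF, Finset.mem_filter, Finset.mem_Icc] at this
  exact this.1.1

lemma not_symB_of_one_le_Tof {a : QStr p} (h : 1 ≤ Tof p a) : ¬ symB p a := by
  intro hs; rw [Tof_eq_zero_of_symB hs] at h; omega

lemma Tof_nonneg (a : QStr p) : 0 ≤ Tof p a := by
  by_cases h : symB p a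
  · rw [Tof_eq_zero_of_symB h]
  · have := one_le_Tof h; omega

lemma Tof_le (a : QStr p) : Tof p a ≤ (p : ℤ) := by
  by_cases h : symB p a
  · rw [Tof_eq_zero_of_symB h]; positivity
  · have := Tof_mem_TF h
    rw [TF, Finset.mem_filter, Finset.mem_Icc] at this
    exact this.1.2

lemma Tof_ne {a : QStr p} (h : ¬ symB p a) :
    ent p a (Tof p a) ≠ ent p a (-(Tof p a)) := by
  have := Tof_mem_TF h
  rw [TF, Finset.mem_filter] at this
  exact this.2

/-- beyond `Tof`, the string is symmetric -/
lemma Tof_spec_sym (a : QStr p) {r : ℤ} (h1 : 1 ≤ r) (h2 : r ≤ (p:ℤ))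
    (h3 : Tof p a < r) : ent p a r = ent p a (-r) := by
  by_contra hne
  have hmem : r ∈ TF p a := Finset.mem_filter.mpr ⟨Finset.mem_Icc.mpr ⟨h1, h2⟩, hne⟩
  have hne2 : (TF p a).Nonempty := ⟨r, hmem⟩
  have := Finset.le_max' _ r hmem
  rw [← Tof_eq_max' a hne2] at this
  omega

end Aux
section Aux2
open Finset
variable {p : ℕ}

lemma ent_primeQ (a : QStr p) (j : ℤ) :
    ent p (primeQ p a) j =
      if 1 ≤ |j| ∧ |j| ≤ Tof p a then -ent p a j else ent p a j := by
  unfold ent primeQ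
  by_cases h : j ∈ Finset.Icc (-(p:ℤ)) (p:ℤ)
  · rw [dif_pos h, dif_pos h]
    by_cases hc : 1 ≤ |j| ∧ |j| ≤ Tof p a
    · rw [if_pos hc, if_pos hc]
      cases a ⟨j, h⟩ <;> simp
    · rw [if_neg hc, if_neg hc]
  · rw [dif_neg h, dif_neg h, if_neg]
    rintro ⟨h1, h2⟩
    have hle := Tof_le a
    rw [Finset.mem_Icc] at h
    rcases abs_cases j with ⟨e1, e2⟩ | ⟨e1, e2⟩ <;> omega

lemma ent_primeQ_in (a : QStr p) {j : ℤ} (h1 : 1 ≤ |j|) (h2 : |j| ≤ Tof p a) :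
    ent p (primeQ p a) j = -ent p a j := by
  rw [ent_primeQ, if_pos ⟨h1, h2⟩]

lemma ent_primeQ_out (a : QStr p) {j : ℤ} (h : ¬ (1 ≤ |j| ∧ |j| ≤ Tof p a)) :
    ent p (primeQ p a) j = ent p a j := by
  rw [ent_primeQ, if_neg h]

lemma Tof_primeQ (a : QStr p) : Tof p (primeQ p a) = Tof p a := by
  unfold Tof
  have : ((Finset.Icc (1 : ℤ) (p : ℤ)).filter
      (fun r => ent p (primeQ p a) r ≠ ent p (primeQ p a) (-r))) =
      ((Finset.Icc (1 : ℤ) (p : ℤ)).filter (fun r => ent p a r ≠ ent p a (-r))) := by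
    apply Finset.filter_congr
    intro r hr
    rw [Finset.mem_Icc] at hr
    have habs : |r| = r := abs_of_nonneg (by omega)
    have habs' : |(-r)| = r := by rw [abs_neg, habs]
    rw [ent_primeQ a r, ent_primeQ a (-r), habs, habs']
    by_cases hc : 1 ≤ r ∧ r ≤ Tof p a
    · rw [if_pos hc, if_pos hc]; simp
    · rw [if_neg hc, if_neg hc]
  rw [this]

lemma primeQ_primeQ (a : QStr p) : primeQ p (primeQ p a) = a := by
  funext j
  show (if 1 ≤ |j.1| ∧ |j.1| ≤ Tof p (primeQ p a) then !(primeQ p a j) else primeQ p a j) = a j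
  rw [Tof_primeQ]
  show (if 1 ≤ |j.1| ∧ |j.1| ≤ Tof p a then
      !(if 1 ≤ |j.1| ∧ |j.1| ≤ Tof p a then !(a j) else a j)
      else (if 1 ≤ |j.1| ∧ |j.1| ≤ Tof p a then !(a j) else a j)) = a j
  by_cases hc : 1 ≤ |j.1| ∧ |j.1| ≤ Tof p a
  · rw [if_pos hc, if_pos hc, Bool.not_not]
  · rw [if_neg hc, if_neg hc]

lemma primeQ_eq_self {a : QStr p} (h : symB p a) : primeQ p a = a := by
  funext j
  show (if 1 ≤ |j.1| ∧ |j.1| ≤ Tof p a then !(a j) else a j) = a j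
  rw [Tof_eq_zero_of_symB h, if_neg]
  rintro ⟨h1, h2⟩; omega

lemma primeQ_ne {a : QStr p} (h : ¬ symB p a) : primeQ p a ≠ a := by
  intro heq
  have h1 := one_le_Tof h
  have h2 := Tof_le a
  have hmem : Tof p a ∈ Finset.Icc (-(p:ℤ)) (p:ℤ) := Finset.mem_Icc.mpr ⟨by omega, h2⟩
  have := congrFun heq ⟨Tof p a, hmem⟩
  have habs : |Tof p a| = Tof p a := abs_of_nonneg (by omega)
  rw [show primeQ p a ⟨Tof p a, hmem⟩ =
    (if 1 ≤ |Tof p a| ∧ |Tof p a| ≤ Tof p a then !(a ⟨Tof p a, hmem⟩) else a ⟨Tof p a, hmem⟩) from rfl,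
    habs, if_pos ⟨h1, le_refl _⟩] at this
  exact Bool.not_ne_self _ this

lemma not_symB_primeQ {a : QStr p} (h : ¬ symB p a) : ¬ symB p (primeQ p a) := by
  apply not_symB_of_one_le_Tof
  rw [Tof_primeQ]
  exact one_le_Tof h

end Aux2
section Aux3
open Finset
variable {p : ℕ}

lemma Gdot_comm (γ : ℕ → ℝ) (a b : QStr p) : Gdot p γ a b = Gdot p γ b a := by
  unfold Gdot; apply Finset.sum_congr rfl; intro j _; ring

lemma Gdot_primeQ_right (γ : ℕ → ℝ) (a b : QStr p)
    (h : ∀ r : ℤ, 1 ≤ r → r ≤ (p:ℤ) → Tof p b < r → ent p a r = ent p a (-r)) :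
    Gdot p γ a (primeQ p b) = -Gdot p γ a b := by
  have key : Gdot p γ a (primeQ p b) + Gdot p γ a b = 0 := by
    unfold Gdot
    rw [← Finset.sum_add_distrib]
    apply Finset.sum_involution (fun j _ => -j)
    · intro j hj
      rw [Finset.mem_Icc] at hj
      rcases eq_or_ne j 0 with rfl | hj0
      · simp [Gam_zero]
      by_cases hw : 1 ≤ |j| ∧ |j| ≤ Tof p b
      · have h1 := ent_primeQ_in b hw.1 hw.2
        have h2 := ent_primeQ_in b (j := -j) (by rw [abs_neg]; exact hw.1) (by rw [abs_neg]; exact hw.2)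
        rw [h1, h2, Gam_neg]; ring
      · have h1 := ent_primeQ_out b hw
        have h2 := ent_primeQ_out b (j := -j) (by rwa [abs_neg])
        push_neg at hw
        have habs : 1 ≤ |j| := by rcases abs_cases j with ⟨e1,e2⟩|⟨e1,e2⟩ <;> omega
        have habsp : |j| ≤ (p:ℤ) := by rcases abs_cases j with ⟨e1,e2⟩|⟨e1,e2⟩ <;> omega
        have hgt : Tof p b < |j| := by have := hw habs; omega
        have hsa : ent p a |j| = ent p a (-|j|) := h |j| habs habsp hgt
        have hsb : ent p b |j| = ent p b (-|j|) := Tof_spec_sym b habs habsp hgt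
        rcases abs_cases j with ⟨e1, _⟩ | ⟨e1, _⟩
        · rw [e1] at hsa hsb
          rw [h1, h2, Gam_neg, ← hsa, ← hsb]; ring
        · rw [e1, neg_neg] at hsa hsb
          rw [h1, h2, Gam_neg, hsa, hsb]; ring
    · intro j hj hne heq
      have : j = 0 := by omega
      subst this
      apply hne; simp [Gam_zero]
    · intro j hj; simp
    · intro j hj; rw [Finset.mem_Icc] at hj ⊢; omega
  linarith [key]

lemma Gdot_primeQ_left (γ : ℕ → ℝ) (a b : QStr p)
    (h : ∀ r : ℤ, 1 ≤ r → r ≤ (p:ℤ) → Tof p a < r → ent p b r = ent p b (-r)) :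
    Gdot p γ (primeQ p a) b = -Gdot p γ a b := by
  rw [Gdot_comm, Gdot_primeQ_right γ b a h, Gdot_comm]

lemma Gdot_symB_zero (γ : ℕ → ℝ) {a b : QStr p} (ha : symB p a) (hb : symB p b) :
    Gdot p γ a b = 0 := by
  unfold Gdot
  apply Finset.sum_involution (fun j _ => -j)
  · intro j hj
    rw [Finset.mem_Icc] at hj
    rcases eq_or_ne j 0 with rfl | hj0
    · simp [Gam_zero]
    rcases lt_or_gt_of_ne hj0 with hneg | hpos
    · have hsa := ha (-j) (Finset.mem_Icc.mpr ⟨by omega, by omega⟩)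
      have hsb := hb (-j) (Finset.mem_Icc.mpr ⟨by omega, by omega⟩)
      rw [neg_neg] at hsa hsb
      rw [Gam_neg, hsa, hsb]; ring
    · have hsa := ha j (Finset.mem_Icc.mpr ⟨by omega, by omega⟩)
      have hsb := hb j (Finset.mem_Icc.mpr ⟨by omega, by omega⟩)
      rw [Gam_neg, hsa, hsb]; ring
  · intro j hj hne heq
    have : j = 0 := by omega
    subst this
    apply hne; simp [Gam_zero]
  · intro j hj; simp
  · intro j hj; rw [Finset.mem_Icc] at hj ⊢; omega

end Aux3
section Aux4
open Finset
variable {p : ℕ}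

lemma bket_neg_neg (x y β : ℝ) : bket (-x) (-y) β = bket x y β := by
  simp only [bket, neg_inj]

lemma bket_flip {x y u : ℝ} (hx : x = 1 ∨ x = -1) (hy : y = 1 ∨ y = -1)
    (hu : u = 1 ∨ u = -1) (hxy : x ≠ y) (β : ℝ) :
    bket (-x) u β * bket u (-y) (-β) = -(bket x u β * bket u y (-β)) := by
  rcases hx with rfl | rfl <;> rcases hy with rfl | rfl <;> rcases hu with rfl | rfl <;>
    first
      | exact absurd rfl hxy
      | (norm_num [bket, Real.cos_neg, Real.sin_neg]; ring)

lemma fQ_primeQ (β : ℕ → ℝ) {a : QStr p} (h : ¬ symB p a) :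
    fQ p β (primeQ p a) = -fQ p β a := by
  have ht1 : 1 ≤ Tof p a := one_le_Tof h
  have htp : Tof p a ≤ (p:ℤ) := Tof_le a
  set t := Tof p a with htdef
  set tn := t.toNat with htndef
  have htnz : (tn : ℤ) = t := Int.toNat_of_nonneg (by omega)
  have htnmem : tn ∈ Finset.Icc 1 p := Finset.mem_Icc.mpr ⟨by omega, by omega⟩
  unfold fQ
  rw [← Finset.mul_prod_erase _ _ htnmem, ← Finset.mul_prod_erase _ _ htnmem]
  have hrest : ∀ r ∈ (Finset.Icc 1 p).erase tn,
      (bket (ent p (primeQ p a) (r : ℤ)) (ent p (primeQ p a) (if r = p then 0 else (r : ℤ) + 1)) (β r) *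
        bket (ent p (primeQ p a) (if r = p then 0 else -((r : ℤ) + 1))) (ent p (primeQ p a) (-(r : ℤ))) (-(β r))) =
      (bket (ent p a (r : ℤ)) (ent p a (if r = p then 0 else (r : ℤ) + 1)) (β r) *
        bket (ent p a (if r = p then 0 else -((r : ℤ) + 1))) (ent p a (-(r : ℤ))) (-(β r))) := by
    intro r hr
    obtain ⟨hrne, hrIcc⟩ := Finset.mem_erase.mp hr
    rw [Finset.mem_Icc] at hrIcc
    obtain ⟨hr1, hrp⟩ := hrIcc
    have hrz : ((r:ℤ) ≠ t) := by omega
    rcases lt_or_gt_of_ne hrz with hlt | hgt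
    · -- r < t : all four indices inside the window
      have hrnep : r ≠ p := by omega
      rw [if_neg hrnep, if_neg hrnep]
      have e1 : ent p (primeQ p a) (r:ℤ) = -ent p a (r:ℤ) :=
        ent_primeQ_in a (by rw [abs_of_nonneg (by omega : (0:ℤ) ≤ r)]; omega)
          (by rw [abs_of_nonneg (by omega : (0:ℤ) ≤ r)]; omega)
      have e2 : ent p (primeQ p a) ((r:ℤ)+1) = -ent p a ((r:ℤ)+1) :=
        ent_primeQ_in a (by rw [abs_of_nonneg (by omega : (0:ℤ) ≤ (r:ℤ)+1)]; omega)
          (by rw [abs_of_nonneg (by omega : (0:ℤ) ≤ (r:ℤ)+1)]; omega)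
      have e3 : ent p (primeQ p a) (-((r:ℤ)+1)) = -ent p a (-((r:ℤ)+1)) :=
        ent_primeQ_in a (by rw [abs_neg, abs_of_nonneg (by omega : (0:ℤ) ≤ (r:ℤ)+1)]; omega)
          (by rw [abs_neg, abs_of_nonneg (by omega : (0:ℤ) ≤ (r:ℤ)+1)]; omega)
      have e4 : ent p (primeQ p a) (-(r:ℤ)) = -ent p a (-(r:ℤ)) :=
        ent_primeQ_in a (by rw [abs_neg, abs_of_nonneg (by omega : (0:ℤ) ≤ r)]; omega)
          (by rw [abs_neg, abs_of_nonneg (by omega : (0:ℤ) ≤ r)]; omega)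
      rw [e1, e2, e3, e4, bket_neg_neg, bket_neg_neg]
    · -- r > t : all four indices outside the window
      have e1 : ent p (primeQ p a) (r:ℤ) = ent p a (r:ℤ) :=
        ent_primeQ_out a (by rw [abs_of_nonneg (by omega : (0:ℤ) ≤ r)]; omega)
      have e4 : ent p (primeQ p a) (-(r:ℤ)) = ent p a (-(r:ℤ)) :=
        ent_primeQ_out a (by rw [abs_neg, abs_of_nonneg (by omega : (0:ℤ) ≤ r)]; omega)
      by_cases hrpe : r = p
      · rw [if_pos hrpe, if_pos hrpe]
        have e2 : ent p (primeQ p a) (0:ℤ) = ent p a (0:ℤ) :=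
          ent_primeQ_out a (by rw [abs_zero]; omega)
        rw [e1, e2, e4]
      · rw [if_neg hrpe, if_neg hrpe]
        have e2 : ent p (primeQ p a) ((r:ℤ)+1) = ent p a ((r:ℤ)+1) :=
          ent_primeQ_out a (by rw [abs_of_nonneg (by omega : (0:ℤ) ≤ (r:ℤ)+1)]; omega)
        have e3 : ent p (primeQ p a) (-((r:ℤ)+1)) = ent p a (-((r:ℤ)+1)) :=
          ent_primeQ_out a (by rw [abs_neg, abs_of_nonneg (by omega : (0:ℤ) ≤ (r:ℤ)+1)]; omega)
        rw [e1, e2, e3, e4]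
  rw [Finset.prod_congr rfl hrest]
  -- now handle the distinguished factor r = tn
  have e1 : ent p (primeQ p a) ((tn:ℤ)) = -ent p a ((tn:ℤ)) :=
    ent_primeQ_in a (by rw [abs_of_nonneg (by omega : (0:ℤ) ≤ tn)]; omega)
      (by rw [abs_of_nonneg (by omega : (0:ℤ) ≤ tn)]; omega)
  have e4 : ent p (primeQ p a) (-(tn:ℤ)) = -ent p a (-(tn:ℤ)) :=
    ent_primeQ_in a (by rw [abs_neg, abs_of_nonneg (by omega : (0:ℤ) ≤ tn)]; omega)
      (by rw [abs_neg, abs_of_nonneg (by omega : (0:ℤ) ≤ tn)]; omega)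
  have hxy : ent p a ((tn:ℤ)) ≠ ent p a (-(tn:ℤ)) := by
    rw [htnz]; exact Tof_ne h
  by_cases hpe : tn = p
  · rw [if_pos hpe, if_pos hpe]
    have e2 : ent p (primeQ p a) (0:ℤ) = ent p a (0:ℤ) :=
      ent_primeQ_out a (by rw [abs_zero]; omega)
    rw [e1, e2, e4,
      bket_flip (ent_cases a _) (ent_cases a _) (ent_cases a _) hxy (β tn)]
    ring
  · rw [if_neg hpe, if_neg hpe]
    have htlt : t < (p:ℤ) := by omega
    have e2 : ent p (primeQ p a) ((tn:ℤ)+1) = ent p a ((tn:ℤ)+1) :=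
      ent_primeQ_out a (by rw [abs_of_nonneg (by omega : (0:ℤ) ≤ (tn:ℤ)+1)]; omega)
    have e3 : ent p (primeQ p a) (-((tn:ℤ)+1)) = ent p a (-((tn:ℤ)+1)) :=
      ent_primeQ_out a (by rw [abs_neg, abs_of_nonneg (by omega : (0:ℤ) ≤ (tn:ℤ)+1)]; omega)
    have huv : ent p a (-((tn:ℤ)+1)) = ent p a ((tn:ℤ)+1) :=
      (Tof_spec_sym a (by omega) (by omega) (by omega)).symm
    rw [e1, e2, e3, e4, huv,
      bket_flip (ent_cases a _) (ent_cases a _) (ent_cases a _) hxy (β tn)]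
    ring
end Aux4
section Aux5
open Finset
variable {p : ℕ}

lemma sum_prime_cancel (g : QStr p → ℂ)
    (hg : ∀ a : QStr p, ¬ symB p a → g (primeQ p a) = -g a) :
    ∑ a : QStr p, g a = ∑ a ∈ Finset.univ.filter (fun a => symB p a), g a := by
  classical
  rw [← Finset.sum_filter_add_sum_filter_not Finset.univ (fun a => symB p a) g]
  have hz : ∑ a ∈ Finset.univ.filter (fun a => ¬ symB p a), g a = 0 := by
    apply Finset.sum_involution (fun a _ => primeQ p a)
    · intro a ha
      have hna : ¬ symB p a := (Finset.mem_filter.mp ha).2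
      rw [hg a hna]; ring
    · intro a ha _
      exact primeQ_ne (Finset.mem_filter.mp ha).2
    · intro a ha
      exact Finset.mem_filter.mpr ⟨Finset.mem_univ _, not_symB_primeQ (Finset.mem_filter.mp ha).2⟩
    · intro a ha
      exact primeQ_primeQ a
  rw [hz, add_zero]

lemma HD_zero (β γ : ℕ → ℝ) (D : ℕ) (a : QStr p) : HD p β γ D 0 a = 1 := rfl

lemma HD_succ (β γ : ℕ → ℝ) (D m : ℕ) (a : QStr p) :
    HD p β γ D (m+1) a =
      (∑ b : QStr p, fQ p β b * HD p β γ D m b *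
        ((Real.cos ((1 / Real.sqrt D) * Gdot p γ a b) : ℝ) : ℂ)) ^ D := rfl

end Aux5
section Aux6
open Finset
variable {p : ℕ}

/-- Index type for the upper half (0..p). -/
def EIdx (p : ℕ) : Type := {j : ℤ // j ∈ Finset.Icc (0 : ℤ) (p : ℤ)}

noncomputable instance (p : ℕ) : Fintype (EIdx p) := by unfold EIdx; infer_instance
instance (p : ℕ) : DecidableEq (EIdx p) := by unfold EIdx; infer_instance

/-- Total function giving the element of `EIdx p` with value `r` (or 0 out of range). -/
def eI (p : ℕ) (r : ℤ) : EIdx p :=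
  ⟨if 0 ≤ r ∧ r ≤ (p:ℤ) then r else 0, by
    split
    · rw [Finset.mem_Icc]; omega
    · rw [Finset.mem_Icc]; omega⟩

lemma eI_val (r : ℤ) (h1 : 0 ≤ r) (h2 : r ≤ (p:ℤ)) : (eI p r).1 = r := by
  unfold eI; exact if_pos ⟨h1, h2⟩

/-- Symmetric extension of an upper-half string. -/
def extS (p : ℕ) (g : EIdx p → Bool) : QStr p := fun j => g (eI p |j.1|)

lemma ent_extS (g : EIdx p → Bool) (j : ℤ) (hj : j ∈ Finset.Icc (-(p:ℤ)) (p:ℤ)) :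
    ent p (extS p g) j = (if g (eI p |j|) then 1 else -1) := by
  unfold ent
  rw [dif_pos hj]
  rfl

lemma symB_extS (g : EIdx p → Bool) : symB p (extS p g) := by
  intro r hr
  rw [Finset.mem_Icc] at hr
  rw [ent_extS g r (Finset.mem_Icc.mpr ⟨by omega, by omega⟩),
    ent_extS g (-r) (Finset.mem_Icc.mpr ⟨by omega, by omega⟩), abs_neg]

/-- `next` index along the cycle 1 → 2 → ... → p → 0. -/
def nxtZ (p : ℕ) (x : ℤ) : ℤ := if x = (p:ℤ) then 0 else x + 1

/-- The xor-with-successor change of variables. -/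
def Phi (p : ℕ) (g : EIdx p → Bool) : EIdx p → Bool :=
  fun i => if 1 ≤ i.1 then xor (g i) (g (eI p (nxtZ p i.1))) else g i

lemma xor_cancel {a b c : Bool} (h : xor a c = xor b c) : a = b := by
  cases a <;> cases b <;> cases c <;> simp_all

lemma Phi_injective : Function.Injective (Phi p) := by
  intro g g' hgg
  have key0 : g (eI p 0) = g' (eI p 0) := by
    have := congrFun hgg (eI p 0)
    unfold Phi at this
    rw [eI_val 0 le_rfl (by positivity)] at this
    rw [if_neg (by omega), if_neg (by omega)] at this
    exact this
  have key : ∀ n : ℕ, ∀ i : EIdx p, i.1 = (p:ℤ) - n → g i = g' i := by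
    intro n
    induction n with
    | zero =>
      intro i hi
      have hmem := i.2
      rw [Finset.mem_Icc] at hmem
      by_cases hp0 : (p:ℤ) = 0
      · have : i = eI p 0 := Subtype.ext (by rw [eI_val 0 le_rfl (by omega)]; omega)
        rw [this]; exact key0
      · have h1 : 1 ≤ i.1 := by omega
        have := congrFun hgg i
        unfold Phi at this
        rw [if_pos h1, if_pos h1] at this
        unfold nxtZ at this
        rw [if_pos (by omega : i.1 = (p:ℤ))] at this
        rw [key0] at this
        exact xor_cancel this
    | succ n ih =>
      intro i hi
      have hmem := i.2
      rw [Finset.mem_Icc] at hmem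
      by_cases h1 : 1 ≤ i.1
      · have := congrFun hgg i
        unfold Phi at this
        rw [if_pos h1, if_pos h1] at this
        unfold nxtZ at this
        rw [if_neg (by omega : ¬ i.1 = (p:ℤ))] at this
        have hnext : g (eI p (i.1 + 1)) = g' (eI p (i.1 + 1)) := by
          apply ih
          rw [eI_val (i.1+1) (by omega) (by omega)]
          omega
        rw [hnext] at this
        exact xor_cancel this
      · have : i = eI p 0 := Subtype.ext (by rw [eI_val 0 le_rfl (by positivity)]; omega)
        rw [this]; exact key0
  funext i
  have hmem := i.2
  rw [Finset.mem_Icc] at hmem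
  exact key ((p:ℤ) - i.1).toNat i (by omega)

/-- the local weight -/
noncomputable def vv (x : Bool) (t : ℝ) : ℂ :=
  if x then ((Real.sin t : ℂ))^2 else ((Real.cos t : ℂ))^2

lemma fQ_extS (β : ℕ → ℝ) (g : EIdx p → Bool) :
    fQ p β (extS p g) = (1/2 : ℂ) * ∏ r ∈ Finset.Icc 1 p, vv (Phi p g (eI p r)) (β r) := by
  unfold fQ
  congr 1
  apply Finset.prod_congr rfl
  intro r hr
  rw [Finset.mem_Icc] at hr
  obtain ⟨hr1, hrp⟩ := hr
  have hPhi : Phi p g (eI p r) = xor (g (eI p r)) (g (eI p (nxtZ p r))) := by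
    unfold Phi
    rw [eI_val r (by omega) (by omega)]
    rw [if_pos (by omega : (1:ℤ) ≤ r)]
  have habs : |(r:ℤ)| = r := abs_of_nonneg (by omega)
  by_cases hpe : r = p
  · rw [if_pos hpe, if_pos hpe]
    rw [ent_extS g r (by rw [Finset.mem_Icc]; omega),
      ent_extS g 0 (by rw [Finset.mem_Icc]; omega),
      ent_extS g (-(r:ℤ)) (by rw [Finset.mem_Icc]; omega),
      abs_neg, abs_zero, habs]
    rw [hPhi]
    have hnxt : nxtZ p (r:ℤ) = 0 := by unfold nxtZ; rw [if_pos (by exact_mod_cast hpe : (r:ℤ) = (p:ℤ))]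
    rw [hnxt]
    rcases Bool.dichotomy (g (eI p (r:ℤ))) with hx | hx <;>
      rcases Bool.dichotomy (g (eI p 0)) with hu | hu <;>
        rw [hx, hu] <;>
        norm_num [bket, vv, Real.cos_neg, Real.sin_neg] <;>
        ring_nf <;>
        simp [Complex.I_sq]
  · rw [if_neg hpe, if_neg hpe]
    rw [ent_extS g r (by rw [Finset.mem_Icc]; omega),
      ent_extS g ((r:ℤ)+1) (by rw [Finset.mem_Icc]; omega),
      ent_extS g (-((r:ℤ)+1)) (by rw [Finset.mem_Icc]; omega),
      ent_extS g (-(r:ℤ)) (by rw [Finset.mem_Icc]; omega),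
      abs_neg, abs_neg, habs, abs_of_nonneg (by omega : (0:ℤ) ≤ (r:ℤ)+1)]
    rw [hPhi]
    have hnxt : nxtZ p (r:ℤ) = (r:ℤ)+1 := by
      unfold nxtZ; rw [if_neg (by exact_mod_cast hpe : ¬ (r:ℤ) = (p:ℤ))]
    rw [hnxt]
    rcases Bool.dichotomy (g (eI p (r:ℤ))) with hx | hx <;>
      rcases Bool.dichotomy (g (eI p ((r:ℤ)+1))) with hu | hu <;>
        rw [hx, hu] <;>
        norm_num [bket, vv, Real.cos_neg, Real.sin_neg] <;>
        ring_nf <;>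
        simp [Complex.I_sq]

end Aux6
section Aux7
open Finset
variable {p : ℕ}

/-- restriction of a string to the upper half -/
def resS (p : ℕ) (a : QStr p) : EIdx p → Bool :=
  fun i => a ⟨i.1, by
    have h2 := i.2
    rw [Finset.mem_Icc] at h2 ⊢
    omega⟩

lemma resS_extS (g : EIdx p → Bool) : resS p (extS p g) = g := by
  funext i
  have h2 := i.2
  rw [Finset.mem_Icc] at h2
  show g (eI p |i.1|) = g i
  congr 1
  exact Subtype.ext (by rw [eI_val |i.1| (abs_nonneg _) (by rw [abs_of_nonneg h2.1]; exact h2.2),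
    abs_of_nonneg h2.1])

lemma extS_resS {a : QStr p} (h : symB p a) : extS p (resS p a) = a := by
  funext j
  have h2 := j.2
  rw [Finset.mem_Icc] at h2
  show (resS p a) (eI p |j.1|) = a j
  unfold resS
  rcases le_or_gt 0 j.1 with hj | hj
  · congr 1
    exact Subtype.ext (by rw [eI_val |j.1| (abs_nonneg _) (by rw [abs_of_nonneg hj]; exact h2.2),
      abs_of_nonneg hj])
  · -- negative index : use symmetry
    have habs : |j.1| = -j.1 := abs_of_neg hj
    have hmem1 : -j.1 ∈ Finset.Icc (1:ℤ) (p:ℤ) := Finset.mem_Icc.mpr ⟨by omega, by omega⟩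
    have hsym := h (-j.1) hmem1
    rw [neg_neg] at hsym
    -- hsym : ent p a j.1 = ent p a (-j.1)  (as reals); convert to Bool equality
    have hmj : (-j.1) ∈ Finset.Icc (-(p:ℤ)) (p:ℤ) := Finset.mem_Icc.mpr ⟨by omega, by omega⟩
    have hjj : (j.1) ∈ Finset.Icc (-(p:ℤ)) (p:ℤ) := Finset.mem_Icc.mpr ⟨by omega, by omega⟩
    unfold ent at hsym
    rw [dif_pos hmj, dif_pos hjj] at hsym
    have hbool := B_inj hsym
    have hval : (eI p |j.1|).1 = -j.1 := by
      rw [eI_val |j.1| (abs_nonneg _) (by omega), habs]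
    show a ⟨(eI p |j.1|).1, _⟩ = a j
    have h6 : (⟨(eI p |j.1|).1, by rw [Finset.mem_Icc, hval]; omega⟩ :
        {j : ℤ // j ∈ Finset.Icc (-(p:ℤ)) (p:ℤ)}) = ⟨-j.1, hmj⟩ := Subtype.ext hval
    rw [h6, ← hbool]

lemma sum_fQ_symB (β : ℕ → ℝ) :
    ∑ a ∈ Finset.univ.filter (fun a => symB p a), fQ p β a = 1 := by
  classical
  -- step 1 : reindex by upper-half strings
  have step1 : ∑ a ∈ Finset.univ.filter (fun a => symB p a), fQ p β a
      = ∑ g : EIdx p → Bool, fQ p β (extS p g) := by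
    apply Finset.sum_nbij' (i := fun a => resS p a) (j := fun g => extS p g)
    · intro a ha; exact Finset.mem_univ _
    · intro g hg
      exact Finset.mem_filter.mpr ⟨Finset.mem_univ _, symB_extS g⟩
    · intro a ha
      exact extS_resS (Finset.mem_filter.mp ha).2
    · intro g hg
      exact resS_extS g
    · intro a ha
      rw [extS_resS (Finset.mem_filter.mp ha).2]
  rw [step1]
  -- step 2 : rewrite the summand via Phi
  have step2 : ∑ g : EIdx p → Bool, fQ p β (extS p g)
      = ∑ g : EIdx p → Bool, (1/2 : ℂ) * ∏ r ∈ Finset.Icc 1 p, vv (Phi p g (eI p r)) (β r) :=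
    Finset.sum_congr rfl (fun g _ => fQ_extS β g)
  rw [step2]
  -- step 3 : change variables along Phi
  have step3 : ∑ g : EIdx p → Bool, (1/2 : ℂ) * ∏ r ∈ Finset.Icc 1 p, vv (Phi p g (eI p r)) (β r)
      = ∑ h : EIdx p → Bool, (1/2 : ℂ) * ∏ r ∈ Finset.Icc 1 p, vv (h (eI p r)) (β r) :=
    Fintype.sum_bijective (Phi p) (Finite.injective_iff_bijective.mp Phi_injective) _ _
      (fun g => rfl)
  rw [step3, ← Finset.mul_sum]
  -- step 4 : extend the product over all of EIdx p
  have step4 : ∀ h : EIdx p → Bool,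
      ∏ r ∈ Finset.Icc 1 p, vv (h (eI p r)) (β r)
        = ∏ i : EIdx p, (if i.1 = 0 then (1:ℂ) else vv (h i) (β i.1.toNat)) := by
    intro h
    rw [← Finset.prod_filter_mul_prod_filter_not Finset.univ (fun i : EIdx p => i.1 = 0)]
    have hz : ∏ i ∈ Finset.univ.filter (fun i : EIdx p => i.1 = 0),
        (if i.1 = 0 then (1:ℂ) else vv (h i) (β i.1.toNat)) = 1 := by
      apply Finset.prod_eq_one
      intro i hi
      rw [if_pos (Finset.mem_filter.mp hi).2]
    rw [hz, one_mul]
    refine Finset.prod_nbij' (fun r => eI p r) (fun i => i.1.toNat) ?_ ?_ ?_ ?_ ?_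
    · intro r hr
      rw [Finset.mem_Icc] at hr
      refine Finset.mem_filter.mpr ⟨Finset.mem_univ _, ?_⟩
      show ¬ (eI p (r:ℤ)).1 = 0
      rw [eI_val r (by omega) (by omega)]
      omega
    · intro i hi
      have h2 := i.2
      rw [Finset.mem_Icc] at h2
      have h3 := (Finset.mem_filter.mp hi).2
      show i.1.toNat ∈ Finset.Icc 1 p
      rw [Finset.mem_Icc]
      omega
    · intro r hr
      rw [Finset.mem_Icc] at hr
      show ((eI p (r:ℤ)).1).toNat = r
      rw [eI_val r (by omega) (by omega)]
      omega
    · intro i hi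
      have h2 := i.2
      rw [Finset.mem_Icc] at h2
      show eI p ((i.1.toNat : ℤ)) = i
      exact Subtype.ext (by rw [eI_val _ (by omega) (by omega)]; omega)
    · intro r hr
      rw [Finset.mem_Icc] at hr
      show vv (h (eI p (r:ℤ))) (β r) =
        if (eI p (r:ℤ)).1 = 0 then (1:ℂ) else vv (h (eI p (r:ℤ))) (β ((eI p (r:ℤ)).1.toNat))
      rw [if_neg (by rw [eI_val r (by omega) (by omega)]; omega)]
      congr 1
      rw [eI_val r (by omega) (by omega)]
      congr 1
  have step5 : ∑ h : EIdx p → Bool, ∏ r ∈ Finset.Icc 1 p, vv (h (eI p r)) (β r)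
      = ∑ h : EIdx p → Bool, ∏ i : EIdx p, (if i.1 = 0 then (1:ℂ) else vv (h i) (β i.1.toNat)) :=
    Finset.sum_congr rfl (fun h _ => step4 h)
  rw [step5]
  -- step 6 : swap sum and product
  have step6 : ∑ h : EIdx p → Bool, ∏ i : EIdx p, (if i.1 = 0 then (1:ℂ) else vv (h i) (β i.1.toNat))
      = ∏ i : EIdx p, ∑ b : Bool, (if i.1 = 0 then (1:ℂ) else vv b (β i.1.toNat)) := by
    rw [← Fintype.piFinset_univ,
      ← Finset.prod_univ_sum (fun _ => (Finset.univ : Finset Bool))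
        (fun (i : EIdx p) (b : Bool) => if i.1 = 0 then (1:ℂ) else vv b (β i.1.toNat))]
  rw [step6]
  -- step 7 : evaluate the inner sums
  have step7 : ∀ i : EIdx p, (∑ b : Bool, (if i.1 = 0 then (1:ℂ) else vv b (β i.1.toNat)))
      = if i.1 = 0 then (2:ℂ) else 1 := by
    intro i
    rw [Fintype.sum_bool]
    by_cases hi : i.1 = 0
    · rw [if_pos hi, if_pos hi, if_pos hi]; norm_num
    · rw [if_neg hi, if_neg hi, if_neg hi]
      have e1 : vv true (β i.1.toNat) = ((Real.sin (β i.1.toNat) : ℂ))^2 := if_pos rfl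
      have e2 : vv false (β i.1.toNat) = ((Real.cos (β i.1.toNat) : ℂ))^2 := if_neg (by simp)
      rw [e1, e2,
        show ((Real.sin (β i.1.toNat) : ℂ))^2 + ((Real.cos (β i.1.toNat) : ℂ))^2
          = (((Real.sin (β i.1.toNat))^2 + (Real.cos (β i.1.toNat))^2 : ℝ) : ℂ) by push_cast; ring,
        Real.sin_sq_add_cos_sq]
      norm_num
  rw [Finset.prod_congr rfl (fun i _ => step7 i)]
  -- step 8 : the product equals 2
  have step8 : ∏ i : EIdx p, (if i.1 = 0 then (2:ℂ) else 1) = 2 := by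
    rw [Finset.prod_eq_single (eI p 0)]
    · rw [if_pos (eI_val 0 le_rfl (by positivity))]
    · intro i _ hine
      rw [if_neg]
      intro hi0
      exact hine (Subtype.ext (by rw [eI_val 0 le_rfl (by positivity), hi0]))
    · intro hmem
      exact absurd (Finset.mem_univ _) hmem
  rw [step8]
  norm_num

end Aux7
section Aux8
open Finset
variable {p : ℕ}

lemma HD_props (β γ : ℕ → ℝ) (D : ℕ) : ∀ m : ℕ,
    (∀ a : QStr p, symB p a → HD p β γ D m a = 1) ∧
    (∀ a : QStr p, HD p β γ D m (primeQ p a) = HD p β γ D m a) := by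
  intro m
  induction m with
  | zero => exact ⟨fun a _ => rfl, fun a => rfl⟩
  | succ m ih =>
    obtain ⟨ih1, ih2⟩ := ih
    have hS1 : ∀ a : QStr p, symB p a →
        (∑ b : QStr p, fQ p β b * HD p β γ D m b *
          ((Real.cos ((1 / Real.sqrt D) * Gdot p γ a b) : ℝ) : ℂ)) = 1 := by
      intro a ha
      have hpair : ∀ b : QStr p, ¬ symB p b →
          fQ p β (primeQ p b) * HD p β γ D m (primeQ p b) *
            ((Real.cos ((1 / Real.sqrt D) * Gdot p γ a (primeQ p b)) : ℝ) : ℂ)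
          = -(fQ p β b * HD p β γ D m b *
            ((Real.cos ((1 / Real.sqrt D) * Gdot p γ a b) : ℝ) : ℂ)) := by
        intro b hb
        have hG : Gdot p γ a (primeQ p b) = -Gdot p γ a b :=
          Gdot_primeQ_right γ a b
            (fun r h1 h2 _ => (ha r (Finset.mem_Icc.mpr ⟨h1, h2⟩)).symm)
        rw [fQ_primeQ β hb, ih2 b, hG, mul_neg, Real.cos_neg]
        ring
      rw [sum_prime_cancel _ hpair]
      have hcongr : ∀ b ∈ Finset.univ.filter (fun b => symB p b),
          fQ p β b * HD p β γ D m b *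
            ((Real.cos ((1 / Real.sqrt D) * Gdot p γ a b) : ℝ) : ℂ) = fQ p β b := by
        intro b hb
        have hsb := (Finset.mem_filter.mp hb).2
        rw [Gdot_symB_zero γ ha hsb, mul_zero, Real.cos_zero, ih1 b hsb]
        norm_num
      rw [Finset.sum_congr rfl hcongr]
      exact sum_fQ_symB β
    have hS2 : ∀ a : QStr p,
        (∑ b : QStr p, fQ p β b * HD p β γ D m b *
          ((Real.cos ((1 / Real.sqrt D) * Gdot p γ (primeQ p a) b) : ℝ) : ℂ))
        = (∑ b : QStr p, fQ p β b * HD p β γ D m b *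
          ((Real.cos ((1 / Real.sqrt D) * Gdot p γ a b) : ℝ) : ℂ)) := by
      intro a
      by_cases ha : symB p a
      · rw [primeQ_eq_self ha]
      · have ht1 : 1 ≤ Tof p a := one_le_Tof ha
        have hzero : ∀ c : QStr p,
            (∀ r : ℤ, 1 ≤ r → r ≤ (p:ℤ) → Tof p a < r → ent p c r = ent p c (-r)) →
            ∑ b ∈ Finset.univ.filter (fun b => ¬ (Tof p b < Tof p a)),
              fQ p β b * HD p β γ D m b *
                ((Real.cos ((1 / Real.sqrt D) * Gdot p γ c b) : ℝ) : ℂ) = 0 := by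
          intro c hc
          apply Finset.sum_involution (fun b _ => primeQ p b)
          · intro b hb
            have hmem := (Finset.mem_filter.mp hb).2
            have hnb : ¬ symB p b := not_symB_of_one_le_Tof (by omega)
            have hG : Gdot p γ c (primeQ p b) = -Gdot p γ c b :=
              Gdot_primeQ_right γ c b (fun r h1 h2 h3 => hc r h1 h2 (by omega))
            rw [fQ_primeQ β hnb, ih2 b, hG, mul_neg, Real.cos_neg]
            ring
          · intro b hb _
            exact primeQ_ne (not_symB_of_one_le_Tof
              (by have := (Finset.mem_filter.mp hb).2; omega))
          · intro b hb
            refine Finset.mem_filter.mpr ⟨Finset.mem_univ _, ?_⟩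
            rw [Tof_primeQ]
            exact (Finset.mem_filter.mp hb).2
          · intro b hb
            exact primeQ_primeQ b
        have hsplit : ∀ c : QStr p,
            (∑ b : QStr p, fQ p β b * HD p β γ D m b *
              ((Real.cos ((1 / Real.sqrt D) * Gdot p γ c b) : ℝ) : ℂ))
            = ∑ b ∈ Finset.univ.filter (fun b => Tof p b < Tof p a),
                fQ p β b * HD p β γ D m b *
                  ((Real.cos ((1 / Real.sqrt D) * Gdot p γ c b) : ℝ) : ℂ)
              + ∑ b ∈ Finset.univ.filter (fun b => ¬ (Tof p b < Tof p a)),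
                fQ p β b * HD p β γ D m b *
                  ((Real.cos ((1 / Real.sqrt D) * Gdot p γ c b) : ℝ) : ℂ) :=
          fun c => (Finset.sum_filter_add_sum_filter_not Finset.univ _ _).symm
        have hcp : ∀ r : ℤ, 1 ≤ r → r ≤ (p:ℤ) → Tof p a < r →
            ent p (primeQ p a) r = ent p (primeQ p a) (-r) := by
          intro r h1 h2 h3
          have habs : |r| = r := abs_of_nonneg (by omega)
          rw [ent_primeQ_out a (by rw [habs]; omega),
            ent_primeQ_out a (by rw [abs_neg, habs]; omega)]
          exact Tof_spec_sym a h1 h2 h3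
        rw [hsplit (primeQ p a), hsplit a, hzero (primeQ p a) hcp,
          hzero a (fun r h1 h2 h3 => Tof_spec_sym a h1 h2 h3), add_zero, add_zero]
        apply Finset.sum_congr rfl
        intro b hb
        have hbmem := (Finset.mem_filter.mp hb).2
        have hG : Gdot p γ (primeQ p a) b = -Gdot p γ a b :=
          Gdot_primeQ_left γ a b
            (fun r h1 h2 h3 => Tof_spec_sym b h1 h2 (by omega))
        rw [hG, mul_neg, Real.cos_neg]
    constructor
    · intro a ha
      rw [HD_succ, hS1 a ha, one_pow]
    · intro a
      rw [HD_succ, HD_succ, hS2 a]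

end Aux8


/-- Σ_a f(a) H_D^{(m)}(a) = 1 for 0 ≤ m ≤ p. -/
theorem stmt_9 (p : ℕ) (hp : 1 ≤ p) (D : ℕ) (hD : 1 ≤ D) (β γ : ℕ → ℝ)
    (m : ℕ) (hm : m ≤ p) :
    ∑ a : QStr p, fQ p β a * HD p β γ D m a = 1 := by
  classical
  have hprops := HD_props (p := p) β γ D m
  have h1 := sum_prime_cancel (p := p) (fun a => fQ p β a * HD p β γ D m a)
    (fun a ha => by
      show fQ p β (primeQ p a) * HD p β γ D m (primeQ p a) = -(fQ p β a * HD p β γ D m a)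
      rw [fQ_primeQ β ha, hprops.2 a]; ring)
  have h2 : ∑ a ∈ Finset.univ.filter (fun a => symB p a),
      (fun a => fQ p β a * HD p β γ D m a) a
      = ∑ a ∈ Finset.univ.filter (fun a => symB p a), fQ p β a :=
    Finset.sum_congr rfl (fun a ha => by
      show fQ p β a * HD p β γ D m a = fQ p β a
      rw [hprops.1 a (Finset.mem_filter.mp ha).2, mul_one])
  rw [h1, h2]
  exact sum_fQ_symB β
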